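/- arXiv:1212.5353 — 7 statements merged into one kernel-verified Lean document; each statement's English description precedes it below -/
import Mathlib

section
/- Correctness of the incremental block merge: let P be a finite planar point set partitioned by x-coordinate into consecutive blocks P_(0), …, P_(i). If CH_{i−1} is the upper hull of P_(0) ∪ ⋯ ∪ P_(i−1) and CH_(i) is the upper hull of P_(i), and L is the upper common tangent of CH_{i−1} and CH_(i), then the upper hull of P_(0) ∪ ⋯ ∪ P_(i) consists of the portion of CH_{i−1} to the left of the left tangent point, the tangent edge L, and the portion of CH_(i) to the right of the right tangent point. -/
/-- `p` is a vertex of the upper hull of the finite planar point set `S` (points with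
distinct `x`-coordinates): for some slope `α`, `p` is the unique maximizer of
`y - α·x` over `S`. -/
def UpperHullVertex (S : Finset (ℝ × ℝ)) (p : ℝ × ℝ) : Prop :=
  p ∈ S ∧ ∃ α : ℝ, ∀ q ∈ S, q ≠ p → q.2 - α * q.1 < p.2 - α * p.1

/-- Perturbation lemma: if `p` strictly maximizes `y - m x` over `S` except for a tie
with `b` which lies strictly to the right, then a slightly larger slope makes `p` the
unique maximizer. -/
lemma perturbR (S : Finset (ℝ × ℝ)) (p b : ℝ × ℝ) (m : ℝ) (hpb : p.1 < b.1)
    (hstr : ∀ q ∈ S, q ≠ p → q ≠ b → q.2 - m * q.1 < p.2 - m * p.1)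
    (hbeq : b.2 - m * b.1 ≤ p.2 - m * p.1) :
    ∃ α : ℝ, ∀ q ∈ S, q ≠ p → q.2 - α * q.1 < p.2 - α * p.1 := by
  classical
  obtain ⟨ε, hε0, hεT⟩ :
      ∃ ε : ℝ, 0 < ε ∧ ∀ q ∈ S, q.1 < p.1 →
        ε * (p.1 - q.1) < (p.2 - m * p.1) - (q.2 - m * q.1) := by
    set T := S.filter (fun q => q.1 < p.1) with hTdef
    by_cases hne : T.Nonempty
    · set f : ℝ × ℝ → ℝ := fun q => ((p.2 - m * p.1) - (q.2 - m * q.1)) / (p.1 - q.1)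
        with hfdef
      have hfpos : ∀ q ∈ T, 0 < f q := by
        intro q hq
        obtain ⟨hqS, hx⟩ := Finset.mem_filter.1 hq
        have hqp : q ≠ p := fun h => by rw [h] at hx; exact lt_irrefl _ hx
        have hqb : q ≠ b := fun h => by rw [h] at hx; linarith
        exact div_pos (by linarith [hstr q hqS hqp hqb]) (by linarith)
      have hinf : 0 < T.inf' hne f := (Finset.lt_inf'_iff hne).2 hfpos
      refine ⟨T.inf' hne f / 2, by linarith, ?_⟩
      intro q hqS hx
      have hqT : q ∈ T := Finset.mem_filter.2 ⟨hqS, hx⟩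
      have h1 : T.inf' hne f / 2 < f q :=
        lt_of_lt_of_le (by linarith) (Finset.inf'_le f hqT)
      have h2 : f q * (p.1 - q.1) = (p.2 - m * p.1) - (q.2 - m * q.1) :=
        div_mul_cancel₀ _ (by linarith)
      calc (T.inf' hne f / 2) * (p.1 - q.1) < f q * (p.1 - q.1) :=
            mul_lt_mul_of_pos_right h1 (by linarith)
        _ = _ := h2
    · exact ⟨1, one_pos, fun q hqS hx => absurd ⟨q, Finset.mem_filter.2 ⟨hqS, hx⟩⟩ hne⟩
  refine ⟨m + ε, fun q hq hqp => ?_⟩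
  by_cases hqb : q = b
  · subst hqb
    nlinarith [mul_pos hε0 (show (0:ℝ) < q.1 - p.1 by linarith)]
  · by_cases hx : q.1 < p.1
    · have h := hεT q hq hx
      nlinarith [h]
    · push_neg at hx
      have h1 := hstr q hq hqp hqb
      nlinarith [mul_nonneg hε0.le (sub_nonneg.2 hx)]

/-- Mirror perturbation lemma: tie point `a` strictly to the left, decrease the slope. -/
lemma perturbL (S : Finset (ℝ × ℝ)) (p a : ℝ × ℝ) (m : ℝ) (hap : a.1 < p.1)
    (hstr : ∀ q ∈ S, q ≠ p → q ≠ a → q.2 - m * q.1 < p.2 - m * p.1)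
    (haeq : a.2 - m * a.1 ≤ p.2 - m * p.1) :
    ∃ α : ℝ, ∀ q ∈ S, q ≠ p → q.2 - α * q.1 < p.2 - α * p.1 := by
  classical
  obtain ⟨ε, hε0, hεT⟩ :
      ∃ ε : ℝ, 0 < ε ∧ ∀ q ∈ S, p.1 < q.1 →
        ε * (q.1 - p.1) < (p.2 - m * p.1) - (q.2 - m * q.1) := by
    set T := S.filter (fun q => p.1 < q.1) with hTdef
    by_cases hne : T.Nonempty
    · set f : ℝ × ℝ → ℝ := fun q => ((p.2 - m * p.1) - (q.2 - m * q.1)) / (q.1 - p.1)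
        with hfdef
      have hfpos : ∀ q ∈ T, 0 < f q := by
        intro q hq
        obtain ⟨hqS, hx⟩ := Finset.mem_filter.1 hq
        have hqp : q ≠ p := fun h => by rw [h] at hx; exact lt_irrefl _ hx
        have hqa : q ≠ a := fun h => by rw [h] at hx; linarith
        exact div_pos (by linarith [hstr q hqS hqp hqa]) (by linarith)
      have hinf : 0 < T.inf' hne f := (Finset.lt_inf'_iff hne).2 hfpos
      refine ⟨T.inf' hne f / 2, by linarith, ?_⟩
      intro q hqS hx
      have hqT : q ∈ T := Finset.mem_filter.2 ⟨hqS, hx⟩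
      have h1 : T.inf' hne f / 2 < f q :=
        lt_of_lt_of_le (by linarith) (Finset.inf'_le f hqT)
      have h2 : f q * (q.1 - p.1) = (p.2 - m * p.1) - (q.2 - m * q.1) :=
        div_mul_cancel₀ _ (by linarith)
      calc (T.inf' hne f / 2) * (q.1 - p.1) < f q * (q.1 - p.1) :=
            mul_lt_mul_of_pos_right h1 (by linarith)
        _ = _ := h2
    · exact ⟨1, one_pos, fun q hqS hx => absurd ⟨q, Finset.mem_filter.2 ⟨hqS, hx⟩⟩ hne⟩
  refine ⟨m - ε, fun q hq hqp => ?_⟩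
  by_cases hqa : q = a
  · subst hqa
    nlinarith [mul_pos hε0 (show (0:ℝ) < p.1 - q.1 by linarith)]
  · by_cases hx : p.1 < q.1
    · have h := hεT q hq hx
      nlinarith [h]
    · push_neg at hx
      have h1 := hstr q hq hqp hqa
      nlinarith [mul_nonneg hε0.le (sub_nonneg.2 hx)]

/-- Correctness of the incremental block merge: if `A` lies strictly to the left of `B`,
`a ∈ A` and `b ∈ B` are upper-hull vertices of `A` resp. `B`, and the line through
`a` and `b` is an upper common tangent (all points of `A ∪ B` on or below it, and
strictly below except at `a` and `b`), then the upper hull of `A ∪ B` consists of the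
part of the upper hull of `A` up to `a`, the tangent edge, and the part of the upper
hull of `B` from `b` on. -/
theorem stmt_8 (A B : Finset (ℝ × ℝ))
    (hAB : ∀ p ∈ A, ∀ q ∈ B, p.1 < q.1)
    (hdist : ∀ r ∈ A ∪ B, ∀ s ∈ A ∪ B, r.1 = s.1 → r = s)
    (a b : ℝ × ℝ) (ha : a ∈ A) (hb : b ∈ B)
    (haV : UpperHullVertex A a) (hbV : UpperHullVertex B b)
    (htangent : ∀ p ∈ A ∪ B,
      p.2 ≤ a.2 + (b.2 - a.2) / (b.1 - a.1) * (p.1 - a.1))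
    (hstrict : ∀ p ∈ A ∪ B, p ≠ a → p ≠ b →
      p.2 < a.2 + (b.2 - a.2) / (b.1 - a.1) * (p.1 - a.1)) :
    ∀ p : ℝ × ℝ,
      UpperHullVertex (A ∪ B) p ↔
        (UpperHullVertex A p ∧ p.1 ≤ a.1) ∨ (UpperHullVertex B p ∧ b.1 ≤ p.1) := by
  classical
  have hab : a.1 < b.1 := hAB a ha b hb
  set m : ℝ := (b.2 - a.2) / (b.1 - a.1) with hm_def
  have hm : m * (b.1 - a.1) = b.2 - a.2 := div_mul_cancel₀ _ (by linarith)
  have htan : ∀ p ∈ A ∪ B, p.2 - m * p.1 ≤ a.2 - m * a.1 := by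
    intro p hp
    have h := htangent p hp
    have := mul_sub m p.1 a.1
    linarith
  have hstrict' : ∀ p ∈ A ∪ B, p ≠ a → p ≠ b → p.2 - m * p.1 < a.2 - m * a.1 := by
    intro p hp h1 h2
    have h := hstrict p hp h1 h2
    have := mul_sub m p.1 a.1
    linarith
  have hbe : b.2 - m * b.1 = a.2 - m * a.1 := by
    have := mul_sub m b.1 a.1
    linarith
  have haA : a ∈ A ∪ B := Finset.mem_union_left _ ha
  have hbB : b ∈ A ∪ B := Finset.mem_union_right _ hb
  intro p
  constructor
  · rintro ⟨hpS, α, hα⟩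
    -- key contradiction for interior points
    have key : ¬ (a.1 < p.1 ∧ p.1 < b.1) := by
      rintro ⟨hl, hr⟩
      have hpa : a ≠ p := fun h => by rw [h] at hl; exact lt_irrefl _ hl
      have hpb : b ≠ p := fun h => by rw [h] at hr; exact lt_irrefl _ hr
      have h1 := hα a haA hpa
      have h2 := hα b hbB hpb
      have h3 := htan p hpS
      have k1 : 0 < (m - α) * (p.1 - a.1) := by nlinarith
      have k2 : 0 < (α - m) * (b.1 - p.1) := by nlinarith
      have c1 : (0:ℝ) < b.1 - p.1 := by linarith
      have c2 : (0:ℝ) < p.1 - a.1 := by linarith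
      nlinarith [mul_pos k1 c1, mul_pos k2 c2]
    rcases Finset.mem_union.1 hpS with hpA | hpB
    · left
      refine ⟨⟨hpA, α, fun q hq => hα q (Finset.mem_union_left _ hq)⟩, ?_⟩
      by_contra hgt
      push_neg at hgt
      exact key ⟨hgt, hAB p hpA b hb⟩
    · right
      refine ⟨⟨hpB, α, fun q hq => hα q (Finset.mem_union_right _ hq)⟩, ?_⟩
      by_contra hgt
      push_neg at hgt
      exact key ⟨hAB a ha p hpB, hgt⟩
  · rintro (⟨⟨hpA, α, hα⟩, hpa⟩ | ⟨⟨hpB, α, hα⟩, hbp⟩)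
    · refine ⟨Finset.mem_union_left _ hpA, ?_⟩
      by_cases hp : p = a
      · subst hp
        exact perturbR (A ∪ B) p b m hab
          (fun q hq h1 h2 => hstrict' q hq h1 h2) hbe.le
      · have hplt : p.1 < a.1 :=
          lt_of_le_of_ne hpa (fun h => hp (hdist p (Finset.mem_union_left _ hpA) a haA h))
      -- α must be steeper than m
        have hap : a ≠ p := fun h => hp h.symm
        have h1 := hα a ha hap
        have h3 := htan p (Finset.mem_union_left _ hpA)
        have k1 : 0 < (m - α) * (p.1 - a.1) := by nlinarith
        have hmα : m < α := by
          rcases mul_pos_iff.1 k1 with ⟨u, v⟩ | ⟨u, v⟩ <;> linarith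
        refine ⟨α, fun q hq hqp => ?_⟩
        rcases Finset.mem_union.1 hq with hqA | hqB
        · exact hα q hqA hqp
        · have hq1 : a.1 < q.1 := hAB a ha q hqB
          have t1 := htan q hq
          have t2 : (m - α) * q.1 < (m - α) * a.1 := by nlinarith
          nlinarith [t1, t2, h1]
    · refine ⟨Finset.mem_union_right _ hpB, ?_⟩
      by_cases hp : p = b
      · subst hp
        refine perturbL (A ∪ B) p a m hab
          (fun q hq h1 h2 => by have := hstrict' q hq h2 h1; linarith) (by linarith)
      · have hplt : b.1 < p.1 :=
          lt_of_le_of_ne hbp (fun h => hp (hdist p (Finset.mem_union_right _ hpB) b hbB h.symm))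
        have hbp' : b ≠ p := fun h => hp h.symm
        have h1 := hα b hb hbp'
        have h3 : p.2 - m * p.1 ≤ b.2 - m * b.1 := by
          have := htan p (Finset.mem_union_right _ hpB); linarith
        have k1 : 0 < (m - α) * (p.1 - b.1) := by nlinarith
        have hmα : α < m := by
          rcases mul_pos_iff.1 k1 with ⟨u, v⟩ | ⟨u, v⟩ <;> linarith
        refine ⟨α, fun q hq hqp => ?_⟩
        rcases Finset.mem_union.1 hq with hqA | hqB
        · have hq1 : q.1 < b.1 := hAB q hqA b hb
          have t1 : q.2 - m * q.1 ≤ b.2 - m * b.1 := by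
            have := htan q hq; linarith
          have t2 : (m - α) * q.1 < (m - α) * b.1 := by nlinarith
          nlinarith [t1, t2, h1]
        · exact hα q hqB hqp
end

section
/- In procedure A₁ for read-only selection: partition n distinct reals into √n blocks of size √n each; let m₁ be the block median with the largest rank ≤ n/2 and m₂ the block median with the smallest rank ≥ n/2 (ranks taken in the whole array). Then the overall median lies in the interval [m₁, m₂], and the number of elements strictly inside (m₁, m₂) is at most 3n/4. -/
private lemma rank_lt_of_lt (S : Finset ℝ) {x y : ℝ} (hy : y ∈ S) (h : x < y) :
    (S.filter (fun z => z ≤ x)).card < (S.filter (fun z => z ≤ y)).card := by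
  apply Finset.card_lt_card
  constructor
  · intro z hz
    simp only [Finset.mem_filter] at *
    exact ⟨hz.1, hz.2.trans h.le⟩
  · intro hsub
    have := hsub (Finset.mem_filter.mpr ⟨hy, le_refl y⟩)
    simp only [Finset.mem_filter] at this
    linarith [this.2]

/-- Procedure `A₁`: partition `n = s²` distinct reals into `s` blocks of size `s`, and
let `med i` be the median of block `i` (rank `⌈s/2⌉` in its block).  Let `m₁` be a
block median whose overall rank is `≤ n/2` and maximal such, and `m₂` a block median
of overall rank `≥ n/2` and minimal such.  Then the overall median `μ` (rank
`⌈n/2⌉`) lies in `[m₁, m₂]`, and the number of elements strictly inside `(m₁, m₂)`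
is at most `3n/4`. -/
theorem stmt_11 (s : ℕ) (hs : 1 ≤ s) (n : ℕ) (hn : n = s * s)
    (S : Finset ℝ) (hcard : S.card = n)
    (blocks : Fin s → Finset ℝ)
    (hdisj : ∀ i j, i ≠ j → Disjoint (blocks i) (blocks j))
    (hunion : Finset.univ.biUnion blocks = S)
    (hbcard : ∀ i, (blocks i).card = s)
    (med : Fin s → ℝ)
    (hmed : ∀ i, med i ∈ blocks i ∧
      ((blocks i).filter (fun x => x ≤ med i)).card = (s + 1) / 2)
    (m₁ m₂ : ℝ) (i₁ i₂ : Fin s) (hm₁ : m₁ = med i₁) (hm₂ : m₂ = med i₂)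
    (hm₁le : 2 * (S.filter (fun x => x ≤ m₁)).card ≤ n)
    (hm₁max : ∀ i, 2 * (S.filter (fun x => x ≤ med i)).card ≤ n →
      (S.filter (fun x => x ≤ med i)).card ≤ (S.filter (fun x => x ≤ m₁)).card)
    (hm₂ge : n ≤ 2 * (S.filter (fun x => x ≤ m₂)).card)
    (hm₂min : ∀ i, n ≤ 2 * (S.filter (fun x => x ≤ med i)).card →
      (S.filter (fun x => x ≤ m₂)).card ≤ (S.filter (fun x => x ≤ med i)).card)
    (μ : ℝ) (hμ : μ ∈ S) (hμrank : (S.filter (fun x => x ≤ μ)).card = (n + 1) / 2) :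
    m₁ ≤ μ ∧ μ ≤ m₂ ∧ (S.filter (fun x => m₁ < x ∧ x < m₂)).card ≤ 3 * n / 4 := by
  have hmedS : ∀ i, med i ∈ S := by
    intro i
    rw [← hunion]
    exact Finset.mem_biUnion.mpr ⟨i, Finset.mem_univ _, (hmed i).1⟩
  have hm₁S : m₁ ∈ S := hm₁ ▸ hmedS i₁
  have hm₂S : m₂ ∈ S := hm₂ ▸ hmedS i₂
  have hA : m₁ ≤ μ := by
    by_contra h
    push_neg at h
    have hlt := rank_lt_of_lt S hm₁S h
    rw [hμrank] at hlt
    omega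
  have hB : μ ≤ m₂ := by
    by_contra h
    push_neg at h
    have hlt := rank_lt_of_lt S hμ h
    rw [hμrank] at hlt
    omega
  refine ⟨hA, hB, ?_⟩
  -- dichotomy: each block median is ≤ m₁ or ≥ m₂
  have hdich : ∀ i, med i ≤ m₁ ∨ m₂ ≤ med i := by
    intro i
    by_cases hc : 2 * (S.filter (fun x => x ≤ med i)).card ≤ n
    · left
      by_contra h
      push_neg at h
      have h1 := rank_lt_of_lt S (hmedS i) h
      have h2 := hm₁max i hc
      omega
    · right
      have hc' : n ≤ 2 * (S.filter (fun x => x ≤ med i)).card := by omega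
      by_contra h
      push_neg at h
      have h1 := rank_lt_of_lt S hm₂S h
      have h2 := hm₂min i hc'
      omega
  -- each block has at least ⌈s/2⌉ elements outside the open interval (m₁, m₂)
  have hkey : ∀ i, (s + 1) / 2 ≤
      ((blocks i).filter (fun x => ¬(m₁ < x ∧ x < m₂))).card := by
    intro i
    rcases hdich i with h | h
    · have hsub : (blocks i).filter (fun x => x ≤ med i) ⊆
          (blocks i).filter (fun x => ¬(m₁ < x ∧ x < m₂)) := by
        intro x hx
        simp only [Finset.mem_filter] at hx ⊢
        exact ⟨hx.1, fun hc => absurd (hx.2.trans h) (not_le.mpr hc.1)⟩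
      have := Finset.card_le_card hsub
      rw [(hmed i).2] at this
      exact this
    · have hnotmem : med i ∉ (blocks i).filter (fun x => ¬ x ≤ med i) := by simp
      have hsub : insert (med i) ((blocks i).filter (fun x => ¬ x ≤ med i)) ⊆
          (blocks i).filter (fun x => ¬(m₁ < x ∧ x < m₂)) := by
        intro x hx
        rcases Finset.mem_insert.mp hx with rfl | hx
        · exact Finset.mem_filter.mpr ⟨(hmed i).1, fun hc => absurd hc.2 (not_lt.mpr h)⟩
        · simp only [Finset.mem_filter, not_le] at hx
          exact Finset.mem_filter.mpr
            ⟨hx.1, fun hc => absurd hc.2 (not_lt.mpr (h.trans hx.2.le))⟩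
      have hcard := Finset.card_le_card hsub
      rw [Finset.card_insert_of_notMem hnotmem] at hcard
      have hsplit := Finset.card_filter_add_card_filter_not
        (s := blocks i) (p := fun x => x ≤ med i)
      rw [(hmed i).2, hbcard i] at hsplit
      omega
  -- sum over disjoint blocks
  have hGsum : s * ((s + 1) / 2) ≤
      (S.filter (fun x => ¬(m₁ < x ∧ x < m₂))).card := by
    rw [← hunion, Finset.filter_biUnion, Finset.card_biUnion]
    · calc s * ((s + 1) / 2) = ∑ _i : Fin s, (s + 1) / 2 := by
            simp [Finset.sum_const, mul_comm]
        _ ≤ _ := Finset.sum_le_sum (fun i _ => hkey i)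
    · intro i _ j _ hij
      exact Finset.disjoint_filter_filter (hdisj i j hij)
  have hsplit := Finset.card_filter_add_card_filter_not
    (s := S) (p := fun x => m₁ < x ∧ x < m₂)
  rw [hcard] at hsplit
  have h1 : n ≤ 2 * (s * ((s + 1) / 2)) := by
    have hle : s ≤ 2 * ((s + 1) / 2) := by omega
    calc n = s * s := hn
      _ ≤ s * (2 * ((s + 1) / 2)) := Nat.mul_le_mul_left s hle
      _ = 2 * (s * ((s + 1) / 2)) := by ring
  obtain ⟨k, hk⟩ : ∃ k, k = s * ((s + 1) / 2) := ⟨_, rfl⟩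
  rw [← hk] at hGsum h1
  omega
end

section
/- The recursive selection scheme A_k runs in O(n^{1+1/(k+1)} (log n)^k) time: if A_{k−1} finds the median of m elements in T_{k−1}(m) = O(m^{1+1/k} (log m)^{k−1}) time, and A_k divides n elements into n^{1/(k+1)} blocks of size n^{k/(k+1)}, computes each block median via A_{k−1}, and needs O(log n) rounds, then T_k(n) = O(n^{1/(k+1)} · T_{k−1}(n^{k/(k+1)}) · log n + n log n) = O(n^{1+1/(k+1)} (log n)^k). -/
/-- Time bound for the recursive selection scheme `A_k`: if `A_{k-1}` finds a median of
`m` elements in time at most `C·m^{1+1/k}·(log m)^{k-1}`, and `A_k` on `n` elements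
divides them into `n^{1/(k+1)}` blocks of size `n^{k/(k+1)}`, computes each block
median via `A_{k-1}`, and needs `O(log n)` rounds, then
`T_k(n) = O(n^{1+1/(k+1)}·(log n)^k)`. -/
theorem stmt_12 (k : ℕ) (hk : 1 ≤ k) (C : ℝ) (hC : 0 < C)
    (Tprev T : ℝ → ℝ)
    (hTprev : ∀ x : ℝ, 2 ≤ x →
      Tprev x ≤ C * x ^ (1 + 1 / (k : ℝ)) * (Real.logb 2 x) ^ ((k : ℝ) - 1))
    (hTprev_nonneg : ∀ x : ℝ, 2 ≤ x → 0 ≤ Tprev x)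
    (hT : ∀ x : ℝ, 4 ≤ x →
      T x ≤ C * (x ^ (1 / ((k : ℝ) + 1)) * Tprev (x ^ ((k : ℝ) / ((k : ℝ) + 1))) *
        Real.logb 2 x + x * Real.logb 2 x)) :
    ∃ C' > 0, ∀ x : ℝ, 4 ≤ x →
      T x ≤ C' * x ^ (1 + 1 / ((k : ℝ) + 1)) * (Real.logb 2 x) ^ (k : ℝ) := by
  refine ⟨C * (C + 1), by positivity, ?_⟩
  intro x hx
  have hx0 : (0:ℝ) < x := by linarith
  have hx1 : (1:ℝ) ≤ x := by linarith
  have hk1 : (1:ℝ) ≤ (k:ℝ) := by exact_mod_cast hk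
  have hk0 : (0:ℝ) < (k:ℝ) := by linarith
  have hkk : (0:ℝ) < (k:ℝ) + 1 := by linarith
  set L := Real.logb 2 x with hLdef
  have hL2 : 2 ≤ L := by
    have h4 : Real.logb 2 4 = 2 := by
      rw [show (4:ℝ) = 2 ^ (2:ℕ) by norm_num]
      simp [Real.logb, Real.log_pow]
      rw [mul_div_assoc, div_self (Real.log_ne_zero_of_pos_of_ne_one (by norm_num) (by norm_num)), mul_one]
    calc (2:ℝ) = Real.logb 2 4 := h4.symm
      _ ≤ L := Real.logb_le_logb_of_le (by norm_num) (by norm_num) hx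
  set y := x ^ ((k:ℝ) / ((k:ℝ) + 1)) with hydef
  have hy2 : (2:ℝ) ≤ y := by
    have h1 : x ^ ((1:ℝ)/2) ≤ y := by
      apply Real.rpow_le_rpow_of_exponent_le hx1
      rw [div_le_div_iff₀ (by norm_num) hkk]
      linarith
    have h2 : (4:ℝ) ^ ((1:ℝ)/2) ≤ x ^ ((1:ℝ)/2) :=
      Real.rpow_le_rpow (by norm_num) hx (by norm_num)
    have h3 : (4:ℝ) ^ ((1:ℝ)/2) = 2 := by
      rw [← Real.sqrt_eq_rpow, show (4:ℝ) = 2 ^ 2 by norm_num,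
        Real.sqrt_sq (by norm_num)]
    linarith
  have hy0 : (0:ℝ) < y := by linarith
  -- y^(1+1/k) = x
  have hyx : y ^ (1 + 1 / (k:ℝ)) = x := by
    rw [hydef, ← Real.rpow_mul hx0.le]
    rw [show (k:ℝ) / ((k:ℝ) + 1) * (1 + 1 / (k:ℝ)) = 1 by field_simp]
    exact Real.rpow_one x
  -- logb 2 y = (k/(k+1)) * L
  have hlogy : Real.logb 2 y = (k:ℝ) / ((k:ℝ) + 1) * L := by
    simp [hydef, Real.logb, Real.log_rpow hx0, hLdef, mul_div_assoc]
  have hL0 : (0:ℝ) < L := by linarith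
  have hratio : (k:ℝ) / ((k:ℝ) + 1) ≤ 1 := by
    rw [div_le_one hkk]; linarith
  have hpow : (Real.logb 2 y) ^ ((k:ℝ) - 1) ≤ L ^ ((k:ℝ) - 1) := by
    apply Real.rpow_le_rpow
    · rw [hlogy]; positivity
    · rw [hlogy]
      nlinarith
    · linarith
  have hTp : Tprev y ≤ C * x * L ^ ((k:ℝ) - 1) := by
    calc Tprev y ≤ C * y ^ (1 + 1 / (k:ℝ)) * (Real.logb 2 y) ^ ((k:ℝ) - 1) :=
          hTprev y hy2
      _ ≤ C * y ^ (1 + 1 / (k:ℝ)) * L ^ ((k:ℝ) - 1) := by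
          apply mul_le_mul_of_nonneg_left hpow
          rw [hyx]; positivity
      _ = C * x * L ^ ((k:ℝ) - 1) := by rw [hyx]
  have hX1 : x ^ (1 / ((k:ℝ) + 1)) * x = x ^ (1 + 1 / ((k:ℝ) + 1)) := by
    rw [add_comm, Real.rpow_add hx0, Real.rpow_one]; ring
  have hLk : L ^ ((k:ℝ) - 1) * L = L ^ (k:ℝ) := by
    nth_rewrite 2 [show L = L ^ (1:ℝ) by rw [Real.rpow_one]]
    rw [← Real.rpow_add hL0]; ring_nf
  have hxp0 : (0:ℝ) ≤ x ^ (1 / ((k:ℝ) + 1)) := by positivity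
  have hLk1 : L ≤ L ^ (k:ℝ) := by
    nth_rewrite 1 [show L = L ^ (1:ℝ) by rw [Real.rpow_one]]
    exact Real.rpow_le_rpow_of_exponent_le (by linarith) hk1
  have hxp1 : x ≤ x ^ (1 + 1 / ((k:ℝ) + 1)) := by
    nth_rewrite 1 [show x = x ^ (1:ℝ) by rw [Real.rpow_one]]
    apply Real.rpow_le_rpow_of_exponent_le hx1
    have : (0:ℝ) < 1 / ((k:ℝ) + 1) := by positivity
    linarith
  have hterm1 : x ^ (1 / ((k:ℝ) + 1)) * Tprev y * L ≤
      C * (x ^ (1 + 1 / ((k:ℝ) + 1)) * L ^ (k:ℝ)) := by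
    calc x ^ (1 / ((k:ℝ) + 1)) * Tprev y * L
        ≤ x ^ (1 / ((k:ℝ) + 1)) * (C * x * L ^ ((k:ℝ) - 1)) * L := by
          apply mul_le_mul_of_nonneg_right _ hL0.le
          exact mul_le_mul_of_nonneg_left hTp hxp0
      _ = C * ((x ^ (1 / ((k:ℝ) + 1)) * x) * (L ^ ((k:ℝ) - 1) * L)) := by ring
      _ = C * (x ^ (1 + 1 / ((k:ℝ) + 1)) * L ^ (k:ℝ)) := by rw [hX1, hLk]
  have hterm2 : x * L ≤ x ^ (1 + 1 / ((k:ℝ) + 1)) * L ^ (k:ℝ) := by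
    apply mul_le_mul hxp1 hLk1 hL0.le (by positivity)
  calc T x ≤ C * (x ^ (1 / ((k:ℝ) + 1)) * Tprev y * L + x * L) := hT x hx
    _ ≤ C * (C * (x ^ (1 + 1 / ((k:ℝ) + 1)) * L ^ (k:ℝ)) +
        x ^ (1 + 1 / ((k:ℝ) + 1)) * L ^ (k:ℝ)) := by
          apply mul_le_mul_of_nonneg_left (add_le_add hterm1 hterm2) hC.le
    _ = C * (C + 1) * x ^ (1 + 1 / ((k:ℝ) + 1)) * L ^ (k:ℝ) := by ring
end

section
/- In Megiddo's 2D LP pruning step: let {(aᵢ, bᵢ)} index constraints y ≥ aᵢx + bᵢ (set I₁) and suppose the optimal x-coordinate x* satisfies x* > x_m. For any pair of constraints i, j ∈ I₁ with aᵢ ≠ aⱼ whose lines intersect at x_{ij} = (bᵢ−bⱼ)/(aⱼ−aᵢ) < x_m, the constraint whose line lies below the other for all x > x_{ij} is redundant on the region x ≥ x_m and can be discarded without changing the optimum. -/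
/-- Megiddo's 2D LP pruning: for lower-bound constraints `y ≥ aᵢx + bᵢ` (`i ∈ I₁`)
with `aᵢ < aⱼ`, if the intersection abscissa `x_{ij} = (bᵢ-bⱼ)/(aⱼ-aᵢ)` is `< x_m`
and the optimum satisfies `x* > x_m`, then constraint `i` (whose line lies below the
other for all `x > x_{ij}`) is redundant on the region `x ≥ x_m`: removing it does
not change the feasible region there. -/
theorem stmt_13 (I : Finset ℕ) (a b : ℕ → ℝ) (i j : ℕ) (hi : i ∈ I) (hj : j ∈ I)
    (hne : i ≠ j) (hij : a i ≠ a j) (hlt : a i < a j) (x_m : ℝ)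
    (hx : (b i - b j) / (a j - a i) < x_m) :
    ∀ x y : ℝ, x_m ≤ x →
      ((∀ t ∈ I, a t * x + b t ≤ y) ↔ ∀ t ∈ I.erase i, a t * x + b t ≤ y) := by
  intro x y hxm
  have hpos : 0 < a j - a i := by linarith
  have hkey : a i * x + b i ≤ a j * x + b j := by
    have h1 : (b i - b j) / (a j - a i) < x := lt_of_lt_of_le hx hxm
    have h2 : b i - b j < x * (a j - a i) := (div_lt_iff₀ hpos).mp h1
    nlinarith
  constructor
  · intro h t ht
    exact h t (Finset.mem_of_mem_erase ht)
  · intro h t ht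
    by_cases hti : t = i
    · subst hti
      exact hkey.trans (h j (Finset.mem_erase.mpr ⟨hne.symm, hj⟩))
    · exact h t (Finset.mem_erase.mpr ⟨hti, ht⟩)
end

section
/- In Megiddo's 2D LP, with g(x) = max_{i∈I₁}(aᵢx + bᵢ) and h(x) = min_{i∈I₂}(aᵢx + bᵢ), if at x = x_m we have g(x_m) > h(x_m), s_g = min{aᵢ : i ∈ I₁, aᵢx_m + bᵢ = g(x_m)} and S_h = max{aᵢ : i ∈ I₂, aᵢx_m + bᵢ = h(x_m)}, and s_g > S_h, then every feasible x (i.e., g(x) ≤ h(x)) satisfies x < x_m. -/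
/-- Megiddo's 2D LP test: with `g(x) = max_{i∈I₁}(aᵢx+bᵢ)` and
`h(x) = min_{i∈I₂}(aᵢx+bᵢ)`, if `g(x_m) > h(x_m)`, `s_g` is the minimum slope
achieving `g(x_m)`, `S_h` the maximum slope achieving `h(x_m)`, and `s_g > S_h`,
then every feasible `x` (i.e. `g x ≤ h x`) satisfies `x < x_m`. -/
theorem stmt_14 (I₁ I₂ : Finset ℕ) (hI₁ : I₁.Nonempty) (hI₂ : I₂.Nonempty)
    (a b : ℕ → ℝ) (x_m : ℝ) (g h : ℝ → ℝ)
    (hg : ∀ x, g x = I₁.sup' hI₁ (fun i => a i * x + b i))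
    (hh : ∀ x, h x = I₂.inf' hI₂ (fun i => a i * x + b i))
    (hinfeas : h x_m < g x_m)
    (s_g S_h : ℝ)
    (hs_g : IsLeast {t : ℝ | ∃ i ∈ I₁, a i * x_m + b i = g x_m ∧ a i = t} s_g)
    (hS_h : IsGreatest {t : ℝ | ∃ i ∈ I₂, a i * x_m + b i = h x_m ∧ a i = t} S_h)
    (hslope : S_h < s_g) :
    ∀ x : ℝ, g x ≤ h x → x < x_m := by
  intro x hx
  by_contra hc
  push_neg at hc
  obtain ⟨i, hi, hig, hia⟩ := hs_g.1
  obtain ⟨j, hj, hjh, hja⟩ := hS_h.1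
  have h1 : a i * x + b i ≤ g x := by rw [hg]; exact Finset.le_sup' (fun i => a i * x + b i) hi
  have h2 : h x ≤ a j * x + b j := by rw [hh]; exact Finset.inf'_le (fun i => a i * x + b i) hj
  nlinarith
end

section
/- In Megiddo's 2D LP, with g, h as above: if g(x_m) > h(x_m), s_g ≤ S_h, and S_g ≥ s_h (where S_g = max slope achieving g(x_m), s_h = min slope achieving h(x_m)), then the LP is infeasible: g(x) > h(x) for all real x. -/
/-- Megiddo's 2D LP infeasibility test: with `g` convex and `h` concave as below, if
`g(x_m) > h(x_m)`, `s_g ≤ S_h` and `S_g ≥ s_h` (where `s_g, S_g` are the min and max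
slopes achieving `g(x_m)`, and `s_h, S_h` those achieving `h(x_m)`), then the LP is
infeasible: `g x > h x` for all real `x`. -/
theorem stmt_15 (I₁ I₂ : Finset ℕ) (hI₁ : I₁.Nonempty) (hI₂ : I₂.Nonempty)
    (a b : ℕ → ℝ) (x_m : ℝ) (g h : ℝ → ℝ)
    (hg : ∀ x, g x = I₁.sup' hI₁ (fun i => a i * x + b i))
    (hh : ∀ x, h x = I₂.inf' hI₂ (fun i => a i * x + b i))
    (hinfeas : h x_m < g x_m)
    (s_g S_g s_h S_h : ℝ)
    (hs_g : IsLeast {t : ℝ | ∃ i ∈ I₁, a i * x_m + b i = g x_m ∧ a i = t} s_g)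
    (hS_g : IsGreatest {t : ℝ | ∃ i ∈ I₁, a i * x_m + b i = g x_m ∧ a i = t} S_g)
    (hs_h : IsLeast {t : ℝ | ∃ i ∈ I₂, a i * x_m + b i = h x_m ∧ a i = t} s_h)
    (hS_h : IsGreatest {t : ℝ | ∃ i ∈ I₂, a i * x_m + b i = h x_m ∧ a i = t} S_h)
    (h₁ : s_g ≤ S_h) (h₂ : s_h ≤ S_g) :
    ∀ x : ℝ, h x < g x := by
  obtain ⟨⟨i₁, hi₁, hgi₁, hsg⟩, -⟩ := hs_g
  obtain ⟨⟨i₂, hi₂, hgi₂, hSg⟩, -⟩ := hS_g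
  obtain ⟨⟨j₁, hj₁, hhj₁, hsh⟩, -⟩ := hs_h
  obtain ⟨⟨j₂, hj₂, hhj₂, hSh⟩, -⟩ := hS_h
  intro x
  rcases le_total x x_m with hx | hx
  · have hgx : a i₁ * x + b i₁ ≤ g x := by
      rw [hg]; exact Finset.le_sup' (fun i => a i * x + b i) hi₁
    have hhx : h x ≤ a j₂ * x + b j₂ := by
      rw [hh]; exact Finset.inf'_le (fun i => a i * x + b i) hj₂
    nlinarith [mul_le_mul_of_nonpos_right (hsg ▸ hSh ▸ h₁) (by linarith : x - x_m ≤ 0)]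
  · have hgx : a i₂ * x + b i₂ ≤ g x := by
      rw [hg]; exact Finset.le_sup' (fun i => a i * x + b i) hi₂
    have hhx : h x ≤ a j₁ * x + b j₁ := by
      rw [hh]; exact Finset.inf'_le (fun i => a i * x + b i) hj₁
    nlinarith [mul_le_mul_of_nonneg_right (hsh ▸ hSg ▸ h₂) (by linarith : 0 ≤ x - x_m)]
end

section
/- In Megiddo's 2D LP, if g(x_m) ≤ h(x_m) and s_g ≤ 0 ≤ S_g (the minimizing slope interval of g at x_m contains 0, and x_m is feasible), then x_m is an optimal solution: g(x_m) = min over feasible x of g(x), i.e., (x_m, g(x_m)) minimizes y over the feasible region. -/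
/-- Megiddo's 2D LP optimality test: if `x_m` is feasible (`g(x_m) ≤ h(x_m)`) and the
slope interval of `g` at `x_m` contains `0` (`s_g ≤ 0 ≤ S_g`), then `x_m` is optimal:
`g(x_m)` is the minimum of `g` over the feasible region. -/
theorem stmt_16 (I₁ I₂ : Finset ℕ) (hI₁ : I₁.Nonempty) (hI₂ : I₂.Nonempty)
    (a b : ℕ → ℝ) (x_m : ℝ) (g h : ℝ → ℝ)
    (hg : ∀ x, g x = I₁.sup' hI₁ (fun i => a i * x + b i))
    (hh : ∀ x, h x = I₂.inf' hI₂ (fun i => a i * x + b i))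
    (hfeas : g x_m ≤ h x_m)
    (s_g S_g : ℝ)
    (hs_g : IsLeast {t : ℝ | ∃ i ∈ I₁, a i * x_m + b i = g x_m ∧ a i = t} s_g)
    (hS_g : IsGreatest {t : ℝ | ∃ i ∈ I₁, a i * x_m + b i = g x_m ∧ a i = t} S_g)
    (hzero : s_g ≤ 0 ∧ 0 ≤ S_g) :
    IsLeast {v : ℝ | ∃ x : ℝ, g x ≤ h x ∧ g x = v} (g x_m) := by
  constructor
  · exact ⟨x_m, hfeas, rfl⟩
  · rintro v ⟨x, _, rfl⟩
    rcases le_total x_m x with hx | hx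
    · obtain ⟨i, hi, heq, ha⟩ := hS_g.1
      have h1 : a i * x + b i ≤ g x := by
        rw [hg]; exact Finset.le_sup' (fun i => a i * x + b i) hi
      nlinarith [hzero.2]
    · obtain ⟨i, hi, heq, ha⟩ := hs_g.1
      have h1 : a i * x + b i ≤ g x := by
        rw [hg]; exact Finset.le_sup' (fun i => a i * x + b i) hi
      nlinarith [hzero.1]
end
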